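/- cov(M) ≤ 𝔡_⋔ ≤ non(N): every ⋔-dominating family C ⊆ 2^ω gives a covering of 2^ω by |C| many meager sets (so cov(M) ≤ 𝔡_⋔), and every non-null subset of 2^ω is a ⋔-dominating family (so 𝔡_⋔ ≤ non(N)). -/

import Mathlib

open MeasureTheory

def seg (k : ℕ) : Finset ℕ := Finset.Ico (2 ^ (k + 1) - 2) (2 ^ (k + 2) - 2)

def eqSeg (f g : ℕ → Bool) (k : ℕ) : Prop := ∀ i ∈ seg k, f i = g i

/-- `f ⋔ g`: `f ↾ I_k ≠ g ↾ I_k` for all but finitely many `k`. -/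
def pfork (f g : ℕ → Bool) : Prop := ∃ n : ℕ, ∀ k, n ≤ k → ¬ eqSeg f g k

/-- `μ` is the uniform product (Haar) probability measure on `2^ω`. -/
def IsUniformProductMeasure (μ : Measure (ℕ → Bool)) : Prop :=
  IsProbabilityMeasure μ ∧
  ∀ (s : Finset ℕ) (σ : ℕ → Bool),
    μ {f : ℕ → Bool | ∀ i ∈ s, f i = σ i} = (2 : ENNReal)⁻¹ ^ s.card

/-- `cov(M)`: the least number of meager sets covering `2^ω`. -/
noncomputable def covMeagre : Cardinal :=
  sInf {c : Cardinal | ∃ 𝒞 : Set (Set (ℕ → Bool)), Cardinal.mk 𝒞 = c ∧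
    (∀ A ∈ 𝒞, IsMeagre A) ∧ ⋃₀ 𝒞 = Set.univ}

/-- `𝔡_⋔`: the least size of a `⋔`-dominating family in `2^ω`. -/
noncomputable def dPfork : Cardinal :=
  sInf {c : Cardinal | ∃ C : Set (ℕ → Bool), Cardinal.mk C = c ∧
    ∀ f : ℕ → Bool, ∃ g ∈ C, pfork f g}

/-- `non(N)`: the least size of a non-null subset of `2^ω`. -/
noncomputable def nonNull (μ : Measure (ℕ → Bool)) : Cardinal :=
  sInf {c : Cardinal | ∃ S : Set (ℕ → Bool), Cardinal.mk S = c ∧ μ S ≠ 0}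

/-!
The complement of `{f | f ⋔ g}` is `⋂ₙ ⋃_{k ≥ n} {f | f ↾ I_k = g ↾ I_k}`, a countable
intersection of dense open sets: `f` can be redefined on an interval `I_k` lying beyond any given
finite set of coordinates. So `{f | f ⋔ g}` is meagre.
In measure, `f ↾ I_k = g ↾ I_k` has probability `2^(-2^(k+1))`, a summable sequence, so by
Borel–Cantelli `f ⋔ g` for almost every `g`; hence every non-null set contains such a `g`.
-/

open Filter Set

def IsPforkDominating (C : Set (ℕ → Bool)) : Prop := ∀ f : ℕ → Bool, ∃ g ∈ C, pfork f g

section Baire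

variable {ι X : Type*} [TopologicalSpace X]

theorem isMeagre_setOf_eventually_notMem {A : ℕ → Set X} (hopen : ∀ k, IsOpen (A k))
    (hdense : ∀ n, Dense (⋃ k ≥ n, A k)) : IsMeagre {x | ∀ᶠ k in atTop, x ∉ A k} := by
  have hlimsup : (⋂ n, ⋃ k ≥ n, A k) ∈ residual X :=
    countable_iInter_mem.2 fun n =>
      residual_of_dense_open (isOpen_biUnion fun k _ => hopen k) (hdense n)
  refine mem_of_superset hlimsup fun x hx hev => ?_
  obtain ⟨n, hn⟩ := eventually_atTop.1 hev
  obtain ⟨k, hk, hxk⟩ := mem_iUnion₂.1 (mem_iInter.1 hx n)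
  exact hn k hk hxk

theorem isOpen_setOf_eqOn [DiscreteTopology X] (g : ι → X) {s : Set ι} (hs : s.Finite) :
    IsOpen {f : ι → X | EqOn f g s} := by
  have hpi : {f : ι → X | EqOn f g s} = s.pi fun i => {g i} := by
    ext f
    simp [EqOn, Set.mem_pi]
  rw [hpi]
  exact isOpen_set_pi hs fun i _ => isOpen_discrete _

theorem dense_iUnion_setOf_eqOn (g : ι → X) {s : ℕ → Set ι} (hs : ∀ i, ∀ᶠ k in atTop, i ∉ s k)
    (n : ℕ) : Dense (⋃ k ≥ n, {f : ι → X | EqOn f g (s k)}) := by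
  classical
  rw [dense_iff_inter_open]
  rintro U hU ⟨x, hx⟩
  obtain ⟨I, u, hxu, hIU⟩ := isOpen_pi_iff.1 hU x hx
  obtain ⟨k, hkI, hnk⟩ :=
    ((eventually_all_finset I).2 (fun i _ => hs i)).and (eventually_ge_atTop n) |>.exists
  refine ⟨(s k).piecewise g x, hIU fun i hi => ?_, mem_iUnion₂.2 ⟨k, hnk, piecewise_eqOn _ _ _⟩⟩
  rw [piecewise_eq_of_notMem _ _ _ (hkI i hi)]
  exact (hxu i hi).2

theorem isMeagre_setOf_eventually_not_eqOn [DiscreteTopology X] (g : ι → X) {s : ℕ → Set ι}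
    (hfin : ∀ k, (s k).Finite) (hs : ∀ i, ∀ᶠ k in atTop, i ∉ s k) :
    IsMeagre {f : ι → X | ∀ᶠ k in atTop, ¬ EqOn f g (s k)} :=
  isMeagre_setOf_eventually_notMem (fun k => isOpen_setOf_eqOn g (hfin k))
    (dense_iUnion_setOf_eqOn g hs)

end Baire

theorem ENNReal.tsum_inv_two_pow_ne_top {n : ℕ → ℕ} (hn : ∀ k, k ≤ n k) :
    ∑' k, (2⁻¹ : ENNReal) ^ n k ≠ ⊤ := by
  refine ne_top_of_le_ne_top (b := ∑' k, (2⁻¹ : ENNReal) ^ k) (by simp)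
    (ENNReal.tsum_le_tsum fun k => ?_)
  exact pow_le_pow_of_le_one zero_le (by norm_num) (hn k)

theorem card_seg (k : ℕ) : (seg k).card = 2 ^ (k + 1) := by
  have h2 : 2 ≤ 2 ^ (k + 1) := Nat.le_self_pow (Nat.succ_ne_zero k) 2
  simp only [seg, Nat.card_Ico, pow_succ 2 (k + 1)]
  omega

theorem eventually_notMem_seg (i : ℕ) : ∀ᶠ k in atTop, i ∉ seg k := by
  refine eventually_atTop.2 ⟨i + 1, fun k hk hi => ?_⟩
  have hk2 : k + 1 < 2 ^ (k + 1) := Nat.lt_two_pow_self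
  simp only [seg, Finset.mem_Ico] at hi
  omega

theorem pfork_iff_eventually {f g : ℕ → Bool} : pfork f g ↔ ∀ᶠ k in atTop, ¬ eqSeg f g k :=
  eventually_atTop.symm

theorem pfork_not (f : ℕ → Bool) : pfork f (fun i => !f i) := by
  refine ⟨0, fun k _ h => ?_⟩
  obtain ⟨i, hi⟩ : (seg k).Nonempty := by
    rw [← Finset.card_pos, card_seg]
    positivity
  simpa using h i hi

theorem isPforkDominating_univ : IsPforkDominating univ :=
  fun f => ⟨_, mem_univ _, pfork_not f⟩

theorem isMeagre_setOf_pfork (g : ℕ → Bool) : IsMeagre {f : ℕ → Bool | pfork f g} := by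
  simp_rw [pfork_iff_eventually]
  exact isMeagre_setOf_eventually_not_eqOn g (fun k => (seg k).finite_toSet) eventually_notMem_seg

theorem ae_pfork {μ : Measure (ℕ → Bool)} (hμ : IsUniformProductMeasure μ) (f : ℕ → Bool) :
    ∀ᵐ g ∂μ, pfork f g := by
  have hmeasure (k : ℕ) : μ {g | eqSeg f g k} = 2⁻¹ ^ 2 ^ (k + 1) := by
    simpa [eqSeg, eq_comm, card_seg] using hμ.2 (seg k) f
  have hsum : ∑' k, μ {g | eqSeg f g k} ≠ ⊤ := by
    simp only [hmeasure]
    exact ENNReal.tsum_inv_two_pow_ne_top fun k => Nat.lt_two_pow_self.le.trans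
      (Nat.pow_le_pow_right two_pos k.le_succ)
  filter_upwards [ae_eventually_notMem hsum] with g hg
  exact pfork_iff_eventually.2 hg

theorem isPforkDominating_of_measure_ne_zero {μ : Measure (ℕ → Bool)}
    (hμ : IsUniformProductMeasure μ) {S : Set (ℕ → Bool)} (hS : μ S ≠ 0) : IsPforkDominating S := by
  intro f
  by_contra! hS_null
  exact hS (measure_mono_null hS_null (ae_iff.1 (ae_pfork hμ f)))

theorem iUnion_setOf_pfork_eq_univ {C : Set (ℕ → Bool)} (hC : IsPforkDominating C) :
    ⋃ g ∈ C, {f : ℕ → Bool | pfork f g} = univ :=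
  eq_univ_of_forall fun f => by simpa using hC f

theorem covMeagre_le_mk {C : Set (ℕ → Bool)} (hC : IsPforkDominating C) :
    covMeagre ≤ Cardinal.mk C := by
  have hcover : ⋃₀ ((fun g => {f | pfork f g}) '' C) = univ := by
    rw [sUnion_image]
    exact iUnion_setOf_pfork_eq_univ hC
  calc covMeagre ≤ Cardinal.mk ((fun g => {f | pfork f g}) '' C) :=
        csInf_le' ⟨_, rfl, by rintro _ ⟨g, -, rfl⟩; exact isMeagre_setOf_pfork g, hcover⟩
    _ ≤ Cardinal.mk C := Cardinal.mk_image_le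

theorem covMeagre_le_dPfork : covMeagre ≤ dPfork :=
  le_csInf ⟨_, univ, rfl, isPforkDominating_univ⟩ fun _ ⟨_, hcard, hC⟩ =>
    hcard ▸ covMeagre_le_mk hC

theorem dPfork_le_nonNull {μ : Measure (ℕ → Bool)} (hμ : IsUniformProductMeasure μ) :
    dPfork ≤ nonNull μ := by
  have := hμ.1
  refine le_csInf ⟨_, univ, rfl, by simp⟩ fun _ ⟨S, hcard, hS⟩ => hcard ▸ ?_
  exact csInf_le' ⟨S, rfl, isPforkDominating_of_measure_ne_zero hμ hS⟩

/-- `cov(M) ≤ 𝔡_⋔ ≤ non(N)`: every `⋔`-dominating family `C` gives a covering of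
`2^ω` by `|C|` many meager sets (so `cov(M) ≤ 𝔡_⋔`), and every non-null subset of
`2^ω` is a `⋔`-dominating family (so `𝔡_⋔ ≤ non(N)`). -/
theorem covMeagre_le_dPfork_le_nonNull (μ : Measure (ℕ → Bool))
    (hμ : IsUniformProductMeasure μ) :
    (∀ C : Set (ℕ → Bool), (∀ f : ℕ → Bool, ∃ g ∈ C, pfork f g) →
      (∀ g ∈ C, IsMeagre {f : ℕ → Bool | pfork f g}) ∧
      (⋃ g ∈ C, {f : ℕ → Bool | pfork f g}) = Set.univ) ∧
    covMeagre ≤ dPfork ∧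
    (∀ S : Set (ℕ → Bool), μ S ≠ 0 → ∀ f : ℕ → Bool, ∃ g ∈ S, pfork f g) ∧
    dPfork ≤ nonNull μ := by
  exact ⟨fun C hC => ⟨fun g _ => isMeagre_setOf_pfork g, iUnion_setOf_pfork_eq_univ hC⟩,
    covMeagre_le_dPfork, fun S hS => isPforkDominating_of_measure_ne_zero hμ hS,
    dPfork_le_nonNull hμ⟩
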